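/- arXiv:1711.06501 — 6 statements merged into one kernel-verified Lean document; each statement's English description precedes it below -/
import Mathlib

section
/- Let S be a type of states, T : S → S → Prop, I : Set S, P : Set S, and let N : ℕ and R : ℕ → Set S be a trace of frames satisfying: R 0 = I; monotonicity R i ⊆ R (i+1) for all i < N; the image invariant that for all i < N, s ∈ R i and T s t imply t ∈ R (i+1); and R i ⊆ P for all i < N. If there exists M < N with R M = R (M+1), then every state reachable from I under T lies in P. -/
theorem pdrc_trace_fixpoint_safety {S : Type*} (T : S → S → Prop)
    (I P : Set S) (N : ℕ) (R : ℕ → Set S)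
    (h0 : R 0 = I)
    (hmono : ∀ i < N, R i ⊆ R (i + 1))
    (himg : ∀ i < N, ∀ s t, s ∈ R i → T s t → t ∈ R (i + 1))
    (hP : ∀ i < N, R i ⊆ P)
    (hfix : ∃ M < N, R M = R (M + 1)) :
    ∀ t : S, (∃ s ∈ I, Relation.ReflTransGen T s t) → t ∈ P := by
  obtain ⟨M, hMN, hfix⟩ := hfix
  have hI : I ⊆ R M := by
    rw [← h0]
    have : ∀ k, k ≤ M → R 0 ⊆ R k := by
      intro k hk
      induction k with
      | zero => exact subset_rfl
      | succ n ih =>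
        exact (ih (Nat.le_of_succ_le hk)).trans
          (hmono n (lt_of_lt_of_le (Nat.lt_of_succ_le hk) (le_of_lt hMN)))
    exact this M le_rfl
  intro t ⟨s, hsI, hst⟩
  have ht : t ∈ R M := by
    induction hst with
    | refl => exact hI hsI
    | tail _ hTab ih =>
      have := himg M hMN _ _ ih hTab
      rwa [← hfix] at this
  exact hP M hMN ht
end

section
/- Let S be a type of states with transition relations T_c, T_u : S → S → Prop, initial states I : Set S and safe states P : Set S. Define Bad = {s : S | ∃ t, t ∉ P ∧ ReflTransGen T_u s t}, and define the canonical supervisor T* by T* s t ↔ (T_u s t ∨ (T_c s t ∧ t ∉ Bad)). If I ∩ Bad = ∅, then every state reachable from I under T* lies in P. -/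
theorem pdrc_canonical_supervisor_safe {S : Type*} (Tc Tu : S → S → Prop)
    (I P : Set S) (Bad : Set S)
    (hBad : Bad = {s : S | ∃ t, t ∉ P ∧ Relation.ReflTransGen Tu s t})
    (Tstar : S → S → Prop)
    (hTstar : ∀ s t, Tstar s t ↔ (Tu s t ∨ (Tc s t ∧ t ∉ Bad)))
    (hI : I ∩ Bad = ∅) :
    ∀ t : S, (∃ s ∈ I, Relation.ReflTransGen Tstar s t) → t ∈ P := by
  rintro t ⟨s, hs, hpath⟩
  have hsBad : s ∉ Bad := fun h => Set.eq_empty_iff_forall_notMem.mp hI s ⟨hs, h⟩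
  have key : t ∉ Bad := by
    induction hpath with
    | refl => exact hsBad
    | tail _ hstep ih =>
      rcases (hTstar _ _).mp hstep with hu | ⟨_, hnb⟩
      · intro hb
        rw [hBad] at hb ih
        obtain ⟨u, hu', hp⟩ := hb
        exact ih ⟨u, hu', Relation.ReflTransGen.head hu hp⟩
      · exact hnb
  by_contra hp
  exact key (hBad ▸ ⟨t, hp, Relation.ReflTransGen.refl⟩)
end

section
/- Let S be a type of states with transition relations T_c, T_u : S → S → Prop, initial states I : Set S and safe states P : Set S. Define Bad = {s : S | ∃ t, t ∉ P ∧ ReflTransGen T_u s t}, and define the canonical supervisor T* by T* s t ↔ (T_u s t ∨ (T_c s t ∧ t ∉ Bad)). Let T^S : S → S → Prop be any safe supervisor, i.e. T_u s t → T^S s t, T^S s t → (T_c s t ∨ T_u s t), and every state reachable from I under T^S lies in P. Then every state reachable from I under T^S is also reachable from I under T*. -/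
/-!
A safe supervisor admits every uncontrollable move, so no state it reaches is in `Bad`. Hence each
of its steps along a reachable path is also a step of `T*`, and the path lifts to `T*`.
-/

open Relation

theorem Relation.ReflTransGen.mono_of_reachable {α : Type*} {r p : α → α → Prop} {a t : α}
    (h : ∀ b c, ReflTransGen r a b → r b c → p b c) (hat : ReflTransGen r a t) :
    ReflTransGen p a t := by
  induction hat with
  | refl => exact .refl
  | tail hab hbc ih => exact ih.tail (h _ _ hab hbc)

theorem uncontrollable_reach_safe_of_reachable {S : Type*} {Tu TS : S → S → Prop} {I P : Set S}
    (hTuTS : ∀ s t, Tu s t → TS s t)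
    (hsafe : ∀ t : S, (∃ s ∈ I, ReflTransGen TS s t) → t ∈ P)
    {t : S} (ht : ∃ s ∈ I, ReflTransGen TS s t) :
    ¬ ∃ u, u ∉ P ∧ ReflTransGen Tu t u := by
  rintro ⟨u, hu, htu⟩
  obtain ⟨s, hs, hst⟩ := ht
  exact hu (hsafe u ⟨s, hs, hst.trans (ReflTransGen.mono hTuTS _ _ htu)⟩)

theorem pdrc_canonical_supervisor_minimally_restrictive {S : Type*}
    (Tc Tu : S → S → Prop) (I P : Set S) (Bad : Set S)
    (hBad : Bad = {s : S | ∃ t, t ∉ P ∧ Relation.ReflTransGen Tu s t})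
    (Tstar : S → S → Prop)
    (hTstar : ∀ s t, Tstar s t ↔ (Tu s t ∨ (Tc s t ∧ t ∉ Bad)))
    (TS : S → S → Prop)
    (hTuTS : ∀ s t, Tu s t → TS s t)
    (hTSsub : ∀ s t, TS s t → (Tc s t ∨ Tu s t))
    (hsafe : ∀ t : S, (∃ s ∈ I, Relation.ReflTransGen TS s t) → t ∈ P) :
    ∀ t : S, (∃ s ∈ I, Relation.ReflTransGen TS s t) →
      (∃ s ∈ I, Relation.ReflTransGen Tstar s t) := by
  subst hBad
  rintro t ⟨s, hs, hst⟩
  refine ⟨s, hs, hst.mono_of_reachable fun b c hsb hbc => (hTstar b c).mpr ?_⟩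
  rcases hTSsub b c hbc with hc | hu
  · exact .inr ⟨hc, uncontrollable_reach_safe_of_reachable hTuTS hsafe ⟨s, hs, hsb.tail hbc⟩⟩
  · exact .inl hu
end

section
/- Let S be a type of states, T : S → S → Prop, I : Set S, and let k ≥ 1. Let R, s : Set S be such that every state reachable from I in at most k−1 steps of T lies in R \ s, and there is no transition from R \ s into s (for all u ∈ R, u ∉ s, and v ∈ s, ¬ T u v). Then no state of s is reachable from I in at most k steps of T. (A state t is reachable from I in at most m steps if there is a sequence s_0 ∈ I, s_1, ..., s_j = t with j ≤ m and T s_i s_{i+1} for all i < j.) -/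
theorem pdrc_blocking_soundness {S : Type*} (T : S → S → Prop)
    (I : Set S) (k : ℕ) (hk : 1 ≤ k) (R s : Set S)
    (hreach : ∀ t : S,
      (∃ m ≤ k - 1, ∃ f : ℕ → S, f 0 ∈ I ∧ f m = t ∧ ∀ j < m, T (f j) (f (j + 1))) →
      t ∈ R \ s)
    (hquery : ∀ u ∈ R, u ∉ s → ∀ v ∈ s, ¬ T u v) :
    ∀ t ∈ s,
      ¬ (∃ m ≤ k, ∃ f : ℕ → S, f 0 ∈ I ∧ f m = t ∧ ∀ j < m, T (f j) (f (j + 1))) := by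
  rintro t ht ⟨m, hm, f, h0, hmt, hstep⟩
  by_cases hmk : m ≤ k - 1
  · have := hreach t ⟨m, hmk, f, h0, hmt, hstep⟩
    exact this.2 ht
  · have hm1 : 1 ≤ m := by omega
    have hprev : f (m - 1) ∈ R \ s := by
      refine hreach _ ⟨m - 1, by omega, f, h0, rfl, fun j hj => hstep j (by omega)⟩
    have hT : T (f (m - 1)) (f m) := by
      have := hstep (m - 1) (by omega)
      simpa [Nat.sub_add_cancel hm1] using this
    exact hquery _ hprev.1 hprev.2 t ht (hmt ▸ hT)
end

section
/- Let S be a type of states with transition relations T_c, T_u : S → S → Prop, initial states I : Set S and safe states P : Set S. Define Bad = {s : S | ∃ t, t ∉ P ∧ ReflTransGen T_u s t}. Let T^S : S → S → Prop be a safe supervisor, i.e. T_u s t → T^S s t, T^S s t → (T_c s t ∨ T_u s t), and every state reachable from I under T^S lies in P. Then no state reachable from I under T^S lies in Bad. -/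
theorem pdrc_safe_supervisor_avoids_bad_general {S : Type*} (Tu : S → S → Prop)
    (I P : Set S) (Bad : Set S)
    (hBad : Bad = {s : S | ∃ t, t ∉ P ∧ Relation.ReflTransGen Tu s t})
    (TS : S → S → Prop)
    (hTuTS : ∀ s t, Tu s t → TS s t)
    (hsafe : ∀ t : S, (∃ s ∈ I, Relation.ReflTransGen TS s t) → t ∈ P) :
    ∀ t : S, (∃ s ∈ I, Relation.ReflTransGen TS s t) → t ∉ Bad := by
  rintro t ⟨s, hs, hst⟩ hbad
  obtain ⟨u, hu, htu⟩ : ∃ u, u ∉ P ∧ Relation.ReflTransGen Tu t u := by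
    rwa [hBad] at hbad
  -- the supervisor cannot disable uncontrollable moves, so it can follow `t ⟶ u` too
  have hsu : Relation.ReflTransGen TS s u :=
    hst.trans (Relation.ReflTransGen.mono hTuTS t u htu)
  exact hu (hsafe u ⟨s, hs, hsu⟩)

theorem pdrc_safe_supervisor_avoids_bad {S : Type*} (Tc Tu : S → S → Prop)
    (I P : Set S) (Bad : Set S)
    (hBad : Bad = {s : S | ∃ t, t ∉ P ∧ Relation.ReflTransGen Tu s t})
    (TS : S → S → Prop)
    (hTuTS : ∀ s t, Tu s t → TS s t)
    (hTSsub : ∀ s t, TS s t → (Tc s t ∨ Tu s t))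
    (hsafe : ∀ t : S, (∃ s ∈ I, Relation.ReflTransGen TS s t) → t ∈ P) :
    ∀ t : S, (∃ s ∈ I, Relation.ReflTransGen TS s t) → t ∉ Bad :=
  pdrc_safe_supervisor_avoids_bad_general Tu I P Bad hBad TS hTuTS hsafe
end

section
/- Let S be a type of states with transition relations T_c, T_u : S → S → Prop, initial states I : Set S and safe states P : Set S. Define Bad = {s : S | ∃ t, t ∉ P ∧ ReflTransGen T_u s t}, and define the canonical supervisor T* by T* s t ↔ (T_u s t ∨ (T_c s t ∧ t ∉ Bad)). Suppose I ∩ Bad = ∅. Then the set of states reachable from I under T* equals the union, over all safe supervisors T^S (relations with T_u s t → T^S s t, T^S s t → (T_c s t ∨ T_u s t), and all states reachable from I under T^S lying in P), of the set of states reachable from I under T^S. -/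
/-!
A state in `Bad` can be driven out of `P` by the plant alone, so no safe supervisor ever
reaches one; conversely the canonical supervisor `T*` never enters `Bad`, because uncontrollable
steps cannot leave the complement of `Bad` and controllable steps into `Bad` are cut. Hence `T*`
is safe, and along any run of a safe supervisor every step is also a step of `T*`.
-/

open Relation Set

namespace Supervisor

variable {S : Type*}

def reachable (R : S → S → Prop) (I : Set S) : Set S :=
  {t | ∃ s ∈ I, ReflTransGen R s t}

def coreachable (R : S → S → Prop) (A : Set S) : Set S :=
  {s | ∃ t ∈ A, ReflTransGen R s t}

/-- The canonical supervisor `T*`: its `Bad` is `coreachable Tu Pᶜ`. -/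
def canonical (Tc Tu : S → S → Prop) (P : Set S) (s t : S) : Prop :=
  Tu s t ∨ Tc s t ∧ t ∉ coreachable Tu Pᶜ

section Reachability

variable {R R' : S → S → Prop} {I A X : Set S}

theorem mem_reachable_of_reflTransGen {s t : S} (hs : s ∈ reachable R I)
    (hst : ReflTransGen R s t) : t ∈ reachable R I :=
  let ⟨a, ha, has⟩ := hs
  ⟨a, ha, has.trans hst⟩

theorem reachable_subset_of_invariant (hI : I ⊆ X) (hX : ∀ ⦃s t⦄, s ∈ X → R s t → t ∈ X) :
    reachable R I ⊆ X := by
  rintro t ⟨s, hs, hst⟩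
  induction hst with
  | refl => exact hI hs
  | tail _ hbc ih => exact hX ih hbc

theorem reachable_subset_reachable (h : ∀ ⦃s t⦄, s ∈ reachable R I → R s t → R' s t) :
    reachable R I ⊆ reachable R' I := by
  have hinv : reachable R I ⊆ reachable R I ∩ reachable R' I :=
    reachable_subset_of_invariant (fun s hs => ⟨⟨s, hs, .refl⟩, ⟨s, hs, .refl⟩⟩)
      fun _ _ ⟨hR, hR'⟩ hst =>
        ⟨mem_reachable_of_reflTransGen hR (.single hst),
          mem_reachable_of_reflTransGen hR' (.single (h hR hst))⟩
  exact fun t ht => (hinv ht).2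

theorem subset_coreachable : A ⊆ coreachable R A :=
  fun s hs => ⟨s, hs, .refl⟩

theorem mem_coreachable_of_head {s t : S} (hst : R s t) (ht : t ∈ coreachable R A) :
    s ∈ coreachable R A :=
  let ⟨u, hu, htu⟩ := ht
  ⟨u, hu, .head hst htu⟩

theorem reachable_subset_compl_coreachable_of_le (hle : ∀ s t, R s t → R' s t)
    (hsafe : reachable R' I ⊆ A) : reachable R' I ⊆ (coreachable R Aᶜ)ᶜ :=
  fun _ hu ⟨_, hv, huv⟩ => hv (hsafe (mem_reachable_of_reflTransGen hu (ReflTransGen.mono hle _ _ huv)))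

end Reachability

section Canonical

variable {Tc Tu : S → S → Prop} {I P : Set S}

theorem reachable_canonical_subset_compl_coreachable (hI : I ∩ coreachable Tu Pᶜ = ∅) :
    reachable (canonical Tc Tu P) I ⊆ (coreachable Tu Pᶜ)ᶜ := by
  refine reachable_subset_of_invariant (fun s hs hbad => hI.subset ⟨hs, hbad⟩) ?_
  rintro s t hs (hu | ⟨-, ht⟩)
  · exact fun ht => hs (mem_coreachable_of_head hu ht)
  · exact ht

theorem reachable_canonical_subset (hI : I ∩ coreachable Tu Pᶜ = ∅) :
    reachable (canonical Tc Tu P) I ⊆ P :=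
  (reachable_canonical_subset_compl_coreachable hI).trans (compl_subset_comm.1 subset_coreachable)

theorem reachable_subset_reachable_canonical {TS : S → S → Prop}
    (hTu : ∀ s t, Tu s t → TS s t) (hTS : ∀ s t, TS s t → Tc s t ∨ Tu s t)
    (hsafe : reachable TS I ⊆ P) :
    reachable TS I ⊆ reachable (canonical Tc Tu P) I := by
  refine reachable_subset_reachable fun s t hs hst => ?_
  rcases hTS s t hst with hc | hu
  · exact .inr ⟨hc, reachable_subset_compl_coreachable_of_le hTu hsafe
      (mem_reachable_of_reflTransGen hs (.single hst))⟩
  · exact .inl hu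

end Canonical

end Supervisor

open Supervisor in
theorem pdrc_canonical_reachable_eq_union {S : Type*} (Tc Tu : S → S → Prop)
    (I P : Set S) (Bad : Set S)
    (hBad : Bad = {s : S | ∃ t, t ∉ P ∧ Relation.ReflTransGen Tu s t})
    (Tstar : S → S → Prop)
    (hTstar : ∀ s t, Tstar s t ↔ (Tu s t ∨ (Tc s t ∧ t ∉ Bad)))
    (hI : I ∩ Bad = ∅) :
    {t : S | ∃ s ∈ I, Relation.ReflTransGen Tstar s t} =
      ⋃ TS : S → S → Prop,
        ⋃ (_ : (∀ s t, Tu s t → TS s t) ∧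
               (∀ s t, TS s t → (Tc s t ∨ Tu s t)) ∧
               (∀ t : S, (∃ s ∈ I, Relation.ReflTransGen TS s t) → t ∈ P)),
          {t : S | ∃ s ∈ I, Relation.ReflTransGen TS s t} := by
  obtain rfl : Bad = coreachable Tu Pᶜ := hBad
  obtain rfl : Tstar = canonical Tc Tu P := funext₂ fun s t => propext (hTstar s t)
  refine Subset.antisymm (fun t ht => mem_iUnion₂.2 ⟨_, ⟨?_, ?_, ?_⟩, ht⟩) ?_
  · exact fun s t hu => .inl hu
  · rintro s t (hu | ⟨hc, -⟩)
    exacts [.inr hu, .inl hc]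
  · exact fun t ht => reachable_canonical_subset hI ht
  · exact iUnion₂_subset fun TS ⟨hTu, hTS, hsafe⟩ =>
      reachable_subset_reachable_canonical hTu hTS fun t ht => hsafe t ht
end
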